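/- arXiv:1704.01562 — 2 statements merged into one kernel-verified Lean document; each statement's English description precedes it below -/
import Mathlib

section
/- Fix an integer m ≥ 1. There exists exactly one function f̃ from words over {0,1,…,m} to the polynomial ring ℤ[q,t,a] satisfying: f̃(∅) = 1; f̃(0v) = (t^{#{i : v_i < m}} + a)·f̃(v); f̃(kv) = t^{#{i : v_i < k}}·f̃(v(k-1)) for 1 ≤ k ≤ m-1; and f̃(mv) = (1-q)·f̃(v(m-1)) + q·f̃(vm). Moreover, for every word v, the image of f̃(v) in R equals (1-q)^{r(v)}·f(v), where r(v) = #{i : v_i = m} and f is the unique R-valued function satisfying (L0)–(L3). -/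
noncomputable section

/-- The polynomial ring `ℤ[q,t,a]`. -/
abbrev P : Type := MvPolynomial (Fin 3) ℤ

/-- The variable `q`. -/
def q : P := MvPolynomial.X 0
/-- The variable `t`. -/
def t : P := MvPolynomial.X 1
/-- The variable `a`. -/
def a : P := MvPolynomial.X 2

/-- `R`, the localization of `ℤ[q,t,a]` at the element `1 - q`. -/
abbrev R : Type := Localization.Away (1 - q)

/-- The localization map `ℤ[q,t,a] → R`. -/
def φ : P →+* R := algebraMap P R

/-- `#{i : v_i < c}`, the number of entries of `v` strictly less than `c`. -/
def cntlt {m : ℕ} (c : ℕ) (v : List (Fin (m + 1))) : ℕ :=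
  v.countP fun y => decide ((y : ℕ) < c)

/-- The relations (L0)–(L3) for a function `f` from words over `{0,1,…,m}` to `R`. -/
def Lrel (m : ℕ) (f : List (Fin (m + 1)) → R) : Prop :=
  -- (L0)
  f [] = 1 ∧
  -- (L1)
  (∀ v : List (Fin (m + 1)),
    f ((0 : Fin (m + 1)) :: v) = (φ t ^ cntlt m v + φ a) * f v) ∧
  -- (L2)
  (∀ (v : List (Fin (m + 1))) (k : ℕ) (_hk1 : 1 ≤ k) (_hk2 : k ≤ m - 1),
    f ((⟨k, by omega⟩ : Fin (m + 1)) :: v) =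
      φ t ^ cntlt k v * f (v ++ [(⟨k - 1, by omega⟩ : Fin (m + 1))])) ∧
  -- (L3)
  (∀ v : List (Fin (m + 1)),
    f (Fin.last m :: v) =
      f (v ++ [(⟨m - 1, by omega⟩ : Fin (m + 1))]) + φ q * f (v ++ [Fin.last m]))

/-- The normalized relations for a function `f̃` from words over `{0,1,…,m}`
to the polynomial ring `ℤ[q,t,a]`. -/
def LrelP (m : ℕ) (f : List (Fin (m + 1)) → P) : Prop :=
  f [] = 1 ∧
  (∀ v : List (Fin (m + 1)),
    f ((0 : Fin (m + 1)) :: v) = (t ^ cntlt m v + a) * f v) ∧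
  (∀ (v : List (Fin (m + 1))) (k : ℕ) (_hk1 : 1 ≤ k) (_hk2 : k ≤ m - 1),
    f ((⟨k, by omega⟩ : Fin (m + 1)) :: v) =
      t ^ cntlt k v * f (v ++ [(⟨k - 1, by omega⟩ : Fin (m + 1))])) ∧
  (∀ v : List (Fin (m + 1)),
    f (Fin.last m :: v) =
      (1 - q) * f (v ++ [(⟨m - 1, by omega⟩ : Fin (m + 1))]) +
        q * f (v ++ [Fin.last m]))

def Sw {m : ℕ} (v : List (Fin (m+1))) : ℕ := (v.map Fin.val).sum

def rho {m : ℕ} (v : List (Fin (m+1))) : ℕ :=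
  (v.takeWhile (fun x : Fin (m+1) => (x : ℕ) == m)).length

lemma Sw_cons {m : ℕ} (x : Fin (m+1)) (v : List (Fin (m+1))) :
    Sw (x :: v) = (x : ℕ) + Sw v := by simp [Sw]

lemma Sw_append {m : ℕ} (v : List (Fin (m+1))) (y : Fin (m+1)) :
    Sw (v ++ [y]) = Sw v + (y : ℕ) := by simp [Sw]

lemma rho_cons {m : ℕ} (x : Fin (m+1)) (hx : (x : ℕ) = m) (v : List (Fin (m+1))) :
    rho (x :: v) = rho v + 1 := by
  simp [rho, List.takeWhile_cons, hx]

lemma takeWhile_append_le {α : Type*} (p : α → Bool) (v w : List α)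
    (h : ∃ x ∈ v, ¬ p x) :
    ((v ++ w).takeWhile p).length ≤ (v.takeWhile p).length := by
  induction v with
  | nil => simp at h
  | cons b v ih =>
    by_cases hp : p b
    · simp only [List.cons_append, List.takeWhile_cons, hp, List.length_cons,
        if_true]
      have : ∃ x ∈ v, ¬ p x := by
        rcases h with ⟨x, hx, hpx⟩
        rcases List.mem_cons.1 hx with rfl | hx
        · exact absurd hp hpx
        · exact ⟨x, hx, hpx⟩
      simpa using ih this
    · simp [List.takeWhile_cons, hp]

lemma rho_append_le {m : ℕ} (v : List (Fin (m+1))) (y : Fin (m+1))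
    (h : ¬ ∀ x ∈ v, (x : ℕ) = m) : rho (v ++ [y]) ≤ rho v := by
  unfold rho
  apply takeWhile_append_le
  push_neg at h
  rcases h with ⟨x, hx, hxm⟩
  exact ⟨x, hx, by simpa using hxm⟩

lemma allm_append {m : ℕ} (v : List (Fin (m+1))) (h : ∀ x ∈ v, (x : ℕ) = m) :
    v ++ [Fin.last m] = Fin.last m :: v := by
  induction v with
  | nil => rfl
  | cons b v ih =>
    have hb : b = Fin.last m := by
      have := h b (by simp)
      exact Fin.ext (by simpa using this)
    have hv : v ++ [Fin.last m] = Fin.last m :: v :=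
      ih (fun x hx => h x (by simp [hx]))
    subst hb
    simp [hv]

lemma one_sub_q_ne : (1 - q : P) ≠ 0 := by
  intro h
  have := congrArg MvPolynomial.constantCoeff h
  simp [q] at this

lemma lex_left {m : ℕ} (x : Fin (m+1)) (v w : List (Fin (m+1)))
    (h : w.length + Sw w < (x :: v).length + Sw (x :: v)) :
    Prod.Lex (fun a₁ a₂ : ℕ => a₁ < a₂) (fun a₁ a₂ : ℕ => a₁ < a₂)
      (w.length + Sw w, rho w) ((x :: v).length + Sw (x :: v), rho (x :: v)) :=
  Prod.Lex.left _ _ h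

lemma lex_right {m : ℕ} (x : Fin (m+1)) (v : List (Fin (m+1)))
    (hall : ¬ ∀ y ∈ v, (y : ℕ) = m) (hx : ¬ (x : ℕ) < m) :
    Prod.Lex (fun a₁ a₂ : ℕ => a₁ < a₂) (fun a₁ a₂ : ℕ => a₁ < a₂)
      ((v ++ [Fin.last m]).length + Sw (v ++ [Fin.last m]), rho (v ++ [Fin.last m]))
      ((x :: v).length + Sw (x :: v), rho (x :: v)) := by
  have hlt := x.isLt
  have hxm : (x : ℕ) = m := by omega
  have e : (v ++ [Fin.last m]).length + Sw (v ++ [Fin.last m])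
      = (x :: v).length + Sw (x :: v) := by
    simp only [Sw_cons, Sw_append, List.length_append, List.length_cons,
      List.length_nil, Fin.val_last, hxm]; omega
  rw [e]
  apply Prod.Lex.right
  rw [rho_cons x hxm]
  have := rho_append_le v (Fin.last m) hall
  omega

def gd (m : ℕ) : List (Fin (m+1)) → P
  | [] => 1
  | x :: v =>
    if (x : ℕ) = 0 then (t ^ cntlt m v + a) * gd m v
    else if h2 : (x : ℕ) < m then
      t ^ cntlt (x : ℕ) v * gd m (v ++ [⟨(x : ℕ) - 1, by omega⟩])
    else if hall : ∀ y ∈ v, (y : ℕ) = m then gd m (v ++ [⟨m - 1, by omega⟩])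
    else (1 - q) * gd m (v ++ [⟨m - 1, by omega⟩]) + q * gd m (v ++ [Fin.last m])
  termination_by v => (v.length + Sw v, rho v)
  decreasing_by
  all_goals first
    | (apply lex_right <;> assumption)
    | (apply lex_left
       simp only [Sw_cons, Sw_append, List.length_append, List.length_cons,
         List.length_nil, Fin.val_last]
       omega)

lemma gd_lrelP (m : ℕ) (hm : 1 ≤ m) : LrelP m (gd m) := by
  refine ⟨by rw [gd], ?_, ?_, ?_⟩
  · intro v
    rw [gd, if_pos (by simp)]
  · intro v k hk1 hk2
    rw [gd, if_neg (by simp; omega), dif_pos (show ((⟨k, by omega⟩ : Fin (m+1)) : ℕ) < m by simp; omega)]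
  · intro v
    have hm0 : ¬ ((Fin.last m : Fin (m+1)) : ℕ) = 0 := by simp; omega
    have hmm : ¬ ((Fin.last m : Fin (m+1)) : ℕ) < m := by simp
    rw [gd, if_neg hm0, dif_neg hmm]
    by_cases hall : ∀ y ∈ v, (y : ℕ) = m
    · rw [dif_pos hall]
      have hrot : v ++ [Fin.last m] = Fin.last m :: v := allm_append v hall
      have h2 : gd m (v ++ [Fin.last m]) = gd m (v ++ [⟨m - 1, by omega⟩]) := by
        rw [hrot, gd, if_neg hm0, dif_neg hmm, dif_pos hall]
      rw [h2]; ring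
    · rw [dif_neg hall]

lemma eq_gd (m : ℕ) (hm : 1 ≤ m) (ft : List (Fin (m+1)) → P) (hft : LrelP m ft)
    (v : List (Fin (m+1))) : ft v = gd m v := by
  have g := gd_lrelP m hm
  cases v with
  | nil => rw [hft.1, g.1]
  | cons x v =>
    by_cases hx0 : (x : ℕ) = 0
    · have hx : x = 0 := Fin.ext (by simpa using hx0)
      subst hx
      rw [hft.2.1 v, g.2.1 v, eq_gd m hm ft hft v]
    · by_cases hxm : (x : ℕ) < m
      · have px : (x : ℕ) - 1 < m + 1 := by omega
        have e1 : ft (x :: v) = t ^ cntlt (x : ℕ) v * ft (v ++ [⟨(x : ℕ) - 1, px⟩]) :=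
          hft.2.2.1 v (x : ℕ) (by omega) (by omega)
        have e2 : gd m (x :: v) = t ^ cntlt (x : ℕ) v * gd m (v ++ [⟨(x : ℕ) - 1, px⟩]) :=
          g.2.2.1 v (x : ℕ) (by omega) (by omega)
        have ih := eq_gd m hm ft hft (v ++ [⟨(x : ℕ) - 1, px⟩])
        rw [e1, e2, ih]
      · have hlt := x.isLt
        have hx : x = Fin.last m := Fin.ext (by simp only [Fin.val_last]; omega)
        subst hx
        have pm : m - 1 < m + 1 := by omega
        have e1 : ft (Fin.last m :: v)
            = (1 - q) * ft (v ++ [⟨m - 1, pm⟩]) + q * ft (v ++ [Fin.last m]) :=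
          hft.2.2.2 v
        have e2 : gd m (Fin.last m :: v)
            = (1 - q) * gd m (v ++ [⟨m - 1, pm⟩]) + q * gd m (v ++ [Fin.last m]) :=
          g.2.2.2 v
        by_cases hall : ∀ y ∈ v, (y : ℕ) = m
        · have hrot : v ++ [Fin.last m] = Fin.last m :: v := allm_append v hall
          rw [hrot] at e1 e2
          have c1 : (1 - q) * ft (Fin.last m :: v)
              = (1 - q) * ft (v ++ [⟨m - 1, pm⟩]) := by linear_combination e1
          have c2 : (1 - q) * gd m (Fin.last m :: v)
              = (1 - q) * gd m (v ++ [⟨m - 1, pm⟩]) := by linear_combination e2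
          refine mul_left_cancel₀ one_sub_q_ne ?_
          have ih := eq_gd m hm ft hft (v ++ [⟨m - 1, pm⟩])
          rw [c1, c2, ih]
        · have ih1 := eq_gd m hm ft hft (v ++ [⟨m - 1, pm⟩])
          have ih2 := eq_gd m hm ft hft (v ++ [Fin.last m])
          rw [e1, e2, ih1, ih2]
  termination_by (v.length + Sw v, rho v)
  decreasing_by
  all_goals first
    | (apply lex_right <;> assumption)
    | (apply lex_left
       simp only [Sw_cons, Sw_append, List.length_append, List.length_cons,
         List.length_nil, Fin.val_last]
       omega)

abbrev rcount {m : ℕ} (v : List (Fin (m+1))) : ℕ :=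
  v.countP fun y => decide ((y : ℕ) = m)

lemma phi_unit : IsUnit (φ (1 - q)) :=
  IsLocalization.Away.algebraMap_isUnit (1 - q)

lemma phi_part (m : ℕ) (hm : 1 ≤ m) (ft : List (Fin (m+1)) → P) (hft : LrelP m ft)
    (f : List (Fin (m+1)) → R) (hf : Lrel m f) (v : List (Fin (m+1))) :
    φ (ft v) = φ (1 - q) ^ rcount v * f v := by
  cases v with
  | nil => simp [hft.1, hf.1, rcount]
  | cons x v =>
    by_cases hx0 : (x : ℕ) = 0
    · have hx : x = 0 := Fin.ext (by simpa using hx0)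
      subst hx
      have hr : rcount ((0 : Fin (m+1)) :: v) = rcount v := by
        have h0m : ¬ (((0 : Fin (m+1)) : ℕ) = m) := by simp; omega
        simp [rcount, List.countP_cons, h0m] <;> omega
      have ih := phi_part m hm ft hft f hf v
      rw [hft.2.1 v, hf.2.1 v, hr, map_mul, map_add, map_pow, ih]
      ring
    · by_cases hxm : (x : ℕ) < m
      · have px : (x : ℕ) - 1 < m + 1 := by omega
        have e1 : ft (x :: v) = t ^ cntlt (x : ℕ) v * ft (v ++ [⟨(x : ℕ) - 1, px⟩]) :=
          hft.2.2.1 v (x : ℕ) (by omega) (by omega)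
        have ef : f (x :: v) = φ t ^ cntlt (x : ℕ) v * f (v ++ [⟨(x : ℕ) - 1, px⟩]) :=
          hf.2.2.1 v (x : ℕ) (by omega) (by omega)
        have hr : rcount (x :: v) = rcount (v ++ [(⟨(x : ℕ) - 1, px⟩ : Fin (m+1))]) := by
          have n1 : ¬ ((x : ℕ) = m) := by omega
          have n2 : ¬ (((⟨(x : ℕ) - 1, px⟩ : Fin (m+1)) : ℕ) = m) := by simp; omega
          simp [rcount, List.countP_cons, List.countP_append, n1, n2]
        have ih := phi_part m hm ft hft f hf (v ++ [⟨(x : ℕ) - 1, px⟩])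
        rw [e1, ef, hr, map_mul, map_pow, ih]
        ring
      · have hlt := x.isLt
        have hx : x = Fin.last m := Fin.ext (by simp only [Fin.val_last]; omega)
        subst hx
        have pm : m - 1 < m + 1 := by omega
        have e1 : ft (Fin.last m :: v)
            = (1 - q) * ft (v ++ [⟨m - 1, pm⟩]) + q * ft (v ++ [Fin.last m]) :=
          hft.2.2.2 v
        have ef : f (Fin.last m :: v)
            = f (v ++ [⟨m - 1, pm⟩]) + φ q * f (v ++ [Fin.last m]) :=
          hf.2.2.2 v
        have hr1 : rcount (Fin.last m :: v) = rcount v + 1 := by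
          simp [rcount, List.countP_cons]
        have hr2 : rcount (v ++ [(⟨m - 1, pm⟩ : Fin (m+1))]) = rcount v := by
          have n2 : ¬ (((⟨m - 1, pm⟩ : Fin (m+1)) : ℕ) = m) := by simp; omega
          simp [rcount, List.countP_append, n2]
        have hr3 : rcount (v ++ [Fin.last m]) = rcount v + 1 := by
          simp [rcount, List.countP_append]
        have ih1 := phi_part m hm ft hft f hf (v ++ [⟨m - 1, pm⟩])
        rw [hr2] at ih1
        by_cases hall : ∀ y ∈ v, (y : ℕ) = m
        · have hrot : v ++ [Fin.last m] = Fin.last m :: v := allm_append v hall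
          rw [hrot] at e1 ef
          have hu : φ (1 - q) = 1 - φ q := by rw [map_sub, map_one]
          have eφ := congrArg φ e1
          rw [map_add, map_mul, map_mul, ih1, hu] at eφ
          have hfe : (1 - φ q) * f (Fin.last m :: v) = f (v ++ [⟨m - 1, pm⟩]) := by
            linear_combination ef
          have key : (1 - φ q) * φ (ft (Fin.last m :: v))
              = (1 - φ q) * ((1 - φ q) ^ (rcount v + 1) * f (Fin.last m :: v)) := by
            linear_combination eφ - (1 - φ q) ^ (rcount v + 1) * hfe
          rw [hr1, hu]
          exact (hu ▸ phi_unit).mul_left_cancel key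
        · have ih2 := phi_part m hm ft hft f hf (v ++ [Fin.last m])
          rw [hr3] at ih2
          rw [e1, ef, hr1, map_add, map_mul, map_mul, ih1, ih2]
          ring
  termination_by (v.length + Sw v, rho v)
  decreasing_by
  all_goals first
    | (apply lex_right <;> assumption)
    | (apply lex_left
       simp only [Sw_cons, Sw_append, List.length_append, List.length_cons,
         List.length_nil, Fin.val_last]
       omega)

/-- There is exactly one `ℤ[q,t,a]`-valued function `f̃` on words satisfying the
normalized relations; moreover its image in `R` is `(1-q)^{r(v)}·f(v)`, where
`r(v) = #{i : v_i = m}` and `f` is the function satisfying (L0)–(L3). -/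
theorem stmt4 (m : ℕ) (hm : 1 ≤ m) :
    (∃! ft : List (Fin (m + 1)) → P, LrelP m ft) ∧
    (∀ ft : List (Fin (m + 1)) → P, LrelP m ft →
      ∀ f : List (Fin (m + 1)) → R, Lrel m f →
        ∀ v : List (Fin (m + 1)),
          φ (ft v) =
            φ (1 - q) ^ (v.countP fun y => decide ((y : ℕ) = m)) * f v) := by
  constructor
  · exact ⟨gd m, gd_lrelP m hm, fun ft hft => funext fun v => eq_gd m hm ft hft v⟩
  · intro ft hft f hf v
    exact phi_part m hm ft hft f hf v
end
end

section
/- In the braid group Br_n, for every 1 ≤ i ≤ n and every m ≥ 1, the element X_{[1,n]}·X_{[n-i+1,n]}^{-1}·Y_{[n-i+1,n]}^{-1}·FT_n^m is conjugate in Br_n to X_{[i,n]}·Y_{[1,i]}^{-1}·FT_n^m. -/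
/-- The braid relations on `g` generators `σ_1,…,σ_g` (0-indexed here):
`σ_iσ_{i+1}σ_i = σ_{i+1}σ_iσ_{i+1}` and `σ_iσ_j = σ_jσ_i` for `|i-j| ≥ 2`. -/
def braidRelsSet (g : ℕ) : Set (FreeGroup (Fin g)) :=
  {r | (∃ i j : Fin g, (i : ℕ) + 1 = (j : ℕ) ∧
          r = FreeGroup.of i * FreeGroup.of j * FreeGroup.of i *
              (FreeGroup.of j * FreeGroup.of i * FreeGroup.of j)⁻¹) ∨
       (∃ i j : Fin g, (i : ℕ) + 2 ≤ (j : ℕ) ∧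
          r = FreeGroup.of i * FreeGroup.of j *
              (FreeGroup.of j * FreeGroup.of i)⁻¹)}

/-- The braid group `Br_n` on `n` strands, presented by generators
`σ_1,…,σ_{n-1}` and the braid relations. -/
def BraidGroup (n : ℕ) : Type := PresentedGroup (braidRelsSet (n - 1))

instance (n : ℕ) : Group (BraidGroup n) :=
  inferInstanceAs (Group (PresentedGroup (braidRelsSet (n - 1))))

/-- The generator `σ_i` of `Br_n`, for `1 ≤ i ≤ n-1` (junk value `1` otherwise). -/
def σ (n i : ℕ) : BraidGroup n :=
  if h : i - 1 < n - 1 then PresentedGroup.of (⟨i - 1, h⟩ : Fin (n - 1)) else 1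

/-- `X_{[i,j]} = σ_{j-1}σ_{j-2}⋯σ_i` in `Br_n` (empty product equals 1). -/
def Xb (n i j : ℕ) : BraidGroup n :=
  ((List.range (j - i)).map fun k => σ n (j - 1 - k)).prod

/-- `Y_{[i,j]} = σ_iσ_{i+1}⋯σ_{j-1}` in `Br_n` (empty product equals 1). -/
def Yb (n i j : ℕ) : BraidGroup n :=
  ((List.range (j - i)).map fun k => σ n (i + k)).prod

/-- The half twist `HT_n = X_{[1,2]}X_{[1,3]}⋯X_{[1,n]}` in `Br_n`. -/
def HTb (n : ℕ) : BraidGroup n :=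
  ((List.range (n - 1)).map fun k => Xb n 1 (k + 2)).prod

/-- The full twist `FT_n = (σ_{n-1}⋯σ_2σ_1)^n` in `Br_n`. -/
def FTb (n : ℕ) : BraidGroup n := Xb n 1 n ^ n

/-- The Jucys–Murphy braid `J_k = X_{[1,k]}Y_{[1,k]}` in `Br_n`. -/
def Jb (n k : ℕ) : BraidGroup n := Xb n 1 k * Yb n 1 k

/-!
Write `δ = X_{[1,n]}`. Conjugation by `δ` shifts generators down by one, `δ σ_{k+1} δ⁻¹ = σ_k`,
so `δ^j X_{[a+j,b+j]} δ^{-j} = X_{[a,b]}` and likewise for `Y`. With `n = i + j`, conjugating the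
first element by `δ^j` fixes `δ` and `FT_n^m = δ^{nm}` and turns
`X_{[j+1,n]}⁻¹ Y_{[j+1,n]}⁻¹` into `X_{[1,i]}⁻¹ Y_{[1,i]}⁻¹`;
finally `δ X_{[1,i]}⁻¹ = X_{[i,n]}` since `δ = X_{[i,n]} X_{[1,i]}`.
-/

theorem SemiconjBy.pow_of_succ {M : Type*} [Monoid M] {g : M} {f : ℕ → M} (t : ℕ)
    (h : ∀ k < t, SemiconjBy g (f (k + 1)) (f k)) : SemiconjBy (g ^ t) (f t) (f 0) := by
  induction t with
  | zero => rw [pow_zero]; exact SemiconjBy.one_left _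
  | succ t ih =>
    rw [pow_succ]
    exact (ih fun k hk => h k (by omega)).mul_left (h t (by omega))

namespace BraidGroup

variable {n : ℕ}

theorem σ_eq_of {i : ℕ} (h : i - 1 < n - 1) : σ n i = PresentedGroup.of ⟨i - 1, h⟩ := dif_pos h

theorem σ_eq_one {i : ℕ} (h : ¬ i - 1 < n - 1) : σ n i = 1 := dif_neg h

theorem σ_braid {k : ℕ} (hk : 1 ≤ k) (hkn : k + 2 ≤ n) :
    σ n k * σ n (k + 1) * σ n k = σ n (k + 1) * σ n k * σ n (k + 1) := by
  have hk' : k - 1 < n - 1 := by omega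
  have hk1 : k + 1 - 1 < n - 1 := by omega
  rw [σ_eq_of hk', σ_eq_of hk1]
  exact PresentedGroup.mk_eq_mk_of_mul_inv_mem
    (Or.inl ⟨⟨k - 1, hk'⟩, ⟨k + 1 - 1, hk1⟩, by simp only; omega, rfl⟩)

-- `1 ≤ k` cannot be dropped: truncated subtraction makes `σ n 0 = σ n 1`.
theorem σ_commute {k l : ℕ} (hk : 1 ≤ k) (hkl : k + 2 ≤ l) : Commute (σ n k) (σ n l) := by
  by_cases hl : l - 1 < n - 1
  · have hk' : k - 1 < n - 1 := by omega
    rw [σ_eq_of hk', σ_eq_of hl]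
    exact PresentedGroup.mk_eq_mk_of_mul_inv_mem
      (Or.inr ⟨⟨k - 1, hk'⟩, ⟨l - 1, hl⟩, by simp only; omega, rfl⟩)
  · rw [σ_eq_one hl]
    exact Commute.one_right _

theorem Xb_of_le {a b : ℕ} (h : b ≤ a) : Xb n a b = 1 := by
  simp [Xb, Nat.sub_eq_zero_of_le h]

theorem Yb_of_le {a b : ℕ} (h : b ≤ a) : Yb n a b = 1 := by
  simp [Yb, Nat.sub_eq_zero_of_le h]

theorem Xb_succ {a b : ℕ} (h : a ≤ b) : Xb n a (b + 1) = σ n b * Xb n a b := by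
  rw [Xb, Nat.sub_add_comm h, List.range_succ_eq_map, List.map_cons, List.prod_cons,
    List.map_map, Xb]
  congr 3
  funext k
  simp only [Function.comp_apply]
  congr 1
  omega

theorem Yb_succ {a b : ℕ} (h : a ≤ b) : Yb n a (b + 1) = Yb n a b * σ n b := by
  rw [Yb, Nat.sub_add_comm h, List.range_succ, List.map_append, List.prod_append, Yb]
  simp only [List.map_cons, List.map_nil, List.prod_cons, List.prod_nil, mul_one]
  congr 2
  omega

theorem Xb_mul_Xb {a b c : ℕ} (hab : a ≤ b) (hbc : b ≤ c) : Xb n b c * Xb n a b = Xb n a c := by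
  rw [Xb, Xb, Xb, show c - a = (c - b) + (b - a) by omega, List.range_add, List.map_append,
    List.prod_append, List.map_map]
  congr 3
  funext k
  simp only [Function.comp_apply]
  congr 1
  omega

theorem Xb_commute_σ {a b m : ℕ} (h : ∀ l, a ≤ l → l < b → Commute (σ n l) (σ n m)) :
    Commute (Xb n a b) (σ n m) := by
  refine Commute.list_prod_left _ _ fun x hx => ?_
  obtain ⟨k, hk, rfl⟩ := List.mem_map.1 hx
  rw [List.mem_range] at hk
  exact h _ (by omega) (by omega)

theorem semiconjBy_Xb_one_σ_succ {k : ℕ} (hk : 1 ≤ k) (hkn : k + 2 ≤ n) :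
    SemiconjBy (Xb n 1 n) (σ n (k + 1)) (σ n k) := by
  have hδ : Xb n 1 n = Xb n (k + 2) n * (σ n (k + 1) * σ n k * Xb n 1 k) := by
    rw [mul_assoc, ← Xb_succ hk, ← Xb_succ (by omega), Xb_mul_Xb (by omega) hkn]
  have hhigh : Commute (Xb n (k + 2) n) (σ n k) :=
    Xb_commute_σ fun l hl _ => (σ_commute hk hl).symm
  have hlow : Commute (Xb n 1 k) (σ n (k + 1)) :=
    Xb_commute_σ fun l hl hlk => σ_commute hl (by omega)
  have hbraid : SemiconjBy (σ n (k + 1) * σ n k) (σ n (k + 1)) (σ n k) := by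
    rw [SemiconjBy, ← mul_assoc, ← σ_braid hk hkn, mul_assoc]
  rw [hδ]
  exact SemiconjBy.mul_left hhigh (hbraid.mul_left hlow)

theorem semiconjBy_Xb_one_Xb_succ {a b : ℕ} (ha : 1 ≤ a) (hbn : b + 1 ≤ n) :
    SemiconjBy (Xb n 1 n) (Xb n (a + 1) (b + 1)) (Xb n a b) := by
  rcases Nat.lt_or_ge b a with hba | hab
  · rw [Xb_of_le (a := a + 1) (b := b + 1) (by omega), Xb_of_le hba.le]
    exact SemiconjBy.one_right _
  induction b, hab using Nat.le_induction with
  | base => rw [Xb_of_le le_rfl, Xb_of_le le_rfl]; exact SemiconjBy.one_right _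
  | succ b hab ih =>
    rw [Xb_succ (by omega), Xb_succ hab]
    exact (semiconjBy_Xb_one_σ_succ (by omega) hbn).mul_right (ih (by omega))

theorem semiconjBy_Xb_one_Yb_succ {a b : ℕ} (ha : 1 ≤ a) (hbn : b + 1 ≤ n) :
    SemiconjBy (Xb n 1 n) (Yb n (a + 1) (b + 1)) (Yb n a b) := by
  rcases Nat.lt_or_ge b a with hba | hab
  · rw [Yb_of_le (a := a + 1) (b := b + 1) (by omega), Yb_of_le hba.le]
    exact SemiconjBy.one_right _
  induction b, hab using Nat.le_induction with
  | base => rw [Yb_of_le le_rfl, Yb_of_le le_rfl]; exact SemiconjBy.one_right _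
  | succ b hab ih =>
    rw [Yb_succ (by omega), Yb_succ hab]
    exact (ih (by omega)).mul_right (semiconjBy_Xb_one_σ_succ (by omega) hbn)

theorem semiconjBy_Xb_one_pow_Xb_add {a b t : ℕ} (ha : 1 ≤ a) (hbn : b + t ≤ n) :
    SemiconjBy (Xb n 1 n ^ t) (Xb n (a + t) (b + t)) (Xb n a b) :=
  SemiconjBy.pow_of_succ (f := fun k => Xb n (a + k) (b + k)) t fun k hk =>
    semiconjBy_Xb_one_Xb_succ (a := a + k) (b := b + k) (by omega) (by omega)

theorem semiconjBy_Xb_one_pow_Yb_add {a b t : ℕ} (ha : 1 ≤ a) (hbn : b + t ≤ n) :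
    SemiconjBy (Xb n 1 n ^ t) (Yb n (a + t) (b + t)) (Yb n a b) :=
  SemiconjBy.pow_of_succ (f := fun k => Yb n (a + k) (b + k)) t fun k hk =>
    semiconjBy_Xb_one_Yb_succ (a := a + k) (b := b + k) (by omega) (by omega)

end BraidGroup

open BraidGroup in
theorem stmt17_general (n i m : ℕ) (hi1 : 1 ≤ i) (hi2 : i ≤ n) :
    IsConj
      (Xb n 1 n * (Xb n (n - i + 1) n)⁻¹ * (Yb n (n - i + 1) n)⁻¹ * FTb n ^ m)
      (Xb n i n * (Yb n 1 i)⁻¹ * FTb n ^ m) := by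
  obtain ⟨j, rfl⟩ := Nat.exists_eq_add_of_le hi2
  set δ := Xb (i + j) 1 (i + j)
  have hX : SemiconjBy (δ ^ j) (Xb (i + j) (1 + j) (i + j)) (Xb (i + j) 1 i) :=
    semiconjBy_Xb_one_pow_Xb_add le_rfl le_rfl
  have hY : SemiconjBy (δ ^ j) (Yb (i + j) (1 + j) (i + j)) (Yb (i + j) 1 i) :=
    semiconjBy_Xb_one_pow_Yb_add le_rfl le_rfl
  have hFT : Commute (δ ^ j) (FTb (i + j) ^ m) := (Commute.pow_pow_self δ j (i + j)).pow_right m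
  have hXin : Xb (i + j) i (i + j) = δ * (Xb (i + j) 1 i)⁻¹ :=
    eq_mul_inv_of_mul_eq (Xb_mul_Xb hi1 hi2)
  rw [Nat.add_sub_cancel_left, add_comm j 1, hXin]
  exact ⟨toUnits (δ ^ j),
    ((SemiconjBy.mul_right (Commute.pow_self δ j) hX.inv_right).mul_right hY.inv_right).mul_right hFT⟩

/-- In `Br_n`, for every `1 ≤ i ≤ n` and `m ≥ 1`, the element
`X_{[1,n]}·X_{[n-i+1,n]}⁻¹·Y_{[n-i+1,n]}⁻¹·FT_n^m` is conjugate in `Br_n` to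
`X_{[i,n]}·Y_{[1,i]}⁻¹·FT_n^m`. -/
theorem stmt17 (n i m : ℕ) (hi1 : 1 ≤ i) (hi2 : i ≤ n) (hm : 1 ≤ m) :
    IsConj
      (Xb n 1 n * (Xb n (n - i + 1) n)⁻¹ * (Yb n (n - i + 1) n)⁻¹ * FTb n ^ m)
      (Xb n i n * (Yb n 1 i)⁻¹ * FTb n ^ m) :=
  stmt17_general n i m hi1 hi2
end
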